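/- arXiv:2403.04564 — 2 statements merged into one kernel-verified Lean document; each statement's English description precedes it below -/
import Mathlib

section
/- If all observations are censored (δ_i = 0 for every i = 1, …, n), then the likelihood L(N, ρ) = Π_{i=1}^n (1 − Σ_{k=0}^{C−1} C(N−i, k) ρ^k (1−ρ)^{N−i−k}) is strictly increasing in N (for fixed ρ ∈ (0,1) and N > n + C), so no finite maximizer in N exists. -/
open Finset

/-- Probability mass function of Binomial(m, ρ) at k. -/
noncomputable def binomPMF (m k : ℕ) (ρ : ℝ) : ℝ :=
  (m.choose k : ℝ) * ρ ^ k * (1 - ρ) ^ (m - k)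

/-- The fully censored likelihood
L(N) = Π_{i=1}^n (1 − Σ_{k=0}^{C−1} C(N−i, k) ρ^k (1−ρ)^{N−i−k}). -/
noncomputable def censoredLik (n C : ℕ) (ρ : ℝ) (N : ℕ) : ℝ :=
  ∏ i ∈ Finset.Icc 1 n, (1 - ∑ k ∈ Finset.range C, binomPMF (N - i) k ρ)

lemma binom_pos {m k : ℕ} (hk : k ≤ m) {ρ : ℝ} (h0 : 0 < ρ) (h1 : ρ < 1) :
    0 < binomPMF m k ρ := by
  unfold binomPMF
  have h : 0 < (m.choose k : ℝ) := by exact_mod_cast Nat.choose_pos hk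
  have h2 : (0:ℝ) < 1 - ρ := by linarith
  positivity

lemma binom_nonneg (m k : ℕ) {ρ : ℝ} (h0 : 0 < ρ) (h1 : ρ < 1) :
    0 ≤ binomPMF m k ρ := by
  unfold binomPMF
  have h : (0:ℝ) ≤ (m.choose k : ℝ) := by positivity
  have h2 : (0:ℝ) < 1 - ρ := by linarith
  positivity

lemma binom_step (m k : ℕ) (hk : 1 ≤ k) (hkm : k ≤ m) (ρ : ℝ) :
    binomPMF (m+1) k ρ = (1-ρ) * binomPMF m k ρ + ρ * binomPMF m (k-1) ρ := by
  obtain ⟨j, rfl⟩ : ∃ j, k = j + 1 := ⟨k - 1, (Nat.succ_pred_eq_of_pos hk).symm⟩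
  have hjm : j + 1 ≤ m := hkm
  simp only [binomPMF, Nat.add_sub_cancel, Nat.succ_sub_succ, Nat.sub_zero]
  have e1 : m - j = (m - (j+1)) + 1 := by omega
  rw [Nat.choose_succ_succ' m j]
  push_cast
  rw [e1]
  ring

lemma sum_step (m : ℕ) (ρ : ℝ) :
    ∀ C, 1 ≤ C → C ≤ m →
      ∑ k ∈ Finset.range C, binomPMF (m+1) k ρ
        = (∑ k ∈ Finset.range C, binomPMF m k ρ) - ρ * binomPMF m (C-1) ρ := by
  intro C
  induction C with
  | zero => intro h; omega
  | succ C ih =>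
    intro _ hCm
    rcases Nat.eq_zero_or_pos C with rfl | hC
    · rw [Finset.sum_range_one, Finset.sum_range_one]
      simp only [binomPMF, Nat.choose_zero_right, pow_zero, Nat.sub_zero,
        Nat.cast_one, one_mul, mul_one, Nat.add_sub_cancel]
      rw [pow_succ]
      ring
    · have hCm' : C ≤ m := by omega
      rw [Finset.sum_range_succ, Finset.sum_range_succ, ih hC hCm',
        binom_step m C hC (by omega)]
      simp only [Nat.add_sub_cancel]
      ring

lemma sum_lt_one {m C : ℕ} (hCm : C ≤ m) {ρ : ℝ} (h0 : 0 < ρ) (h1 : ρ < 1) :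
    ∑ k ∈ Finset.range C, binomPMF m k ρ < 1 := by
  have htot : ∑ k ∈ Finset.range (m+1), binomPMF m k ρ = 1 := by
    rw [show ∑ k ∈ Finset.range (m+1), binomPMF m k ρ
        = ∑ k ∈ Finset.range (m+1), ρ ^ k * (1-ρ) ^ (m-k) * (m.choose k : ℝ) from
      Finset.sum_congr rfl (fun k _ => by unfold binomPMF; ring), ← add_pow]
    simp
  rw [← htot]
  apply Finset.sum_lt_sum_of_subset (Finset.range_subset_range.2 (by omega))
    (i := C) (by simp; omega) (by simp) (binom_pos hCm h0 h1)
  intro j _ _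
  exact binom_nonneg m j h0 h1

lemma factor_lt {m C : ℕ} (hC : 1 ≤ C) (hCm : C ≤ m) {ρ : ℝ} (h0 : 0 < ρ) (h1 : ρ < 1) :
    1 - ∑ k ∈ Finset.range C, binomPMF m k ρ
      < 1 - ∑ k ∈ Finset.range C, binomPMF (m+1) k ρ := by
  rw [sum_step m ρ C hC hCm]
  have : 0 < ρ * binomPMF m (C-1) ρ :=
    mul_pos h0 (binom_pos (by omega) h0 h1)
  linarith

/-- If all observations are censored, the likelihood is strictly increasing in N
for N > n + C (ρ ∈ (0,1) fixed), so it has no maximizer in N on that range. -/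
theorem all_censored_likelihood_strictly_increasing
    (n C : ℕ) (ρ : ℝ) (hn : 1 ≤ n) (hC : 1 ≤ C) (hρ0 : 0 < ρ) (hρ1 : ρ < 1) :
    (∀ N : ℕ, n + C < N → censoredLik n C ρ N < censoredLik n C ρ (N + 1)) ∧
    ¬ ∃ N : ℕ, n + C < N ∧
        ∀ M : ℕ, n + C < M → censoredLik n C ρ M ≤ censoredLik n C ρ N := by
  have hmain : ∀ N : ℕ, n + C < N → censoredLik n C ρ N < censoredLik n C ρ (N + 1) := by
    intro N hN
    unfold censoredLik
    apply Finset.prod_lt_prod_of_nonempty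
    · intro i hi
      rw [Finset.mem_Icc] at hi
      have hCm : C ≤ N - i := by omega
      have := sum_lt_one hCm hρ0 hρ1
      linarith
    · intro i hi
      rw [Finset.mem_Icc] at hi
      have hCm : C ≤ N - i := by omega
      have hNi : N + 1 - i = (N - i) + 1 := by omega
      rw [hNi]
      exact factor_lt hC hCm hρ0 hρ1
    · exact ⟨1, Finset.mem_Icc.2 ⟨le_refl 1, hn⟩⟩
  refine ⟨hmain, ?_⟩
  rintro ⟨N, hN, hmax⟩
  have h1 := hmain N hN
  have h2 := hmax (N + 1) (by omega)
  linarith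
end

section
/- For fixed z with 0 ≤ z < C and fixed ρ ∈ (0,1), the binomial probability mass function m ↦ C(m, z) ρ^z (1−ρ)^{m−z} tends to 0 as m → ∞. Consequently, if at least one observation is uncensored (some δ_i = 1), the RDS likelihood L(N, ρ) for fixed ρ tends to 0 as N → ∞, guaranteeing a finite maximizer in N. -/
open Finset Filter

/-- Upper-tail probability P[Binomial(m, ρ) ≥ x]. -/
noncomputable def binomTail (m x : ℕ) (ρ : ℝ) : ℝ :=
  ∑ k ∈ Finset.Icc x m, binomPMF m k ρ

/-- RDS likelihood L(N, ρ) = Π_i P[Y_i = z_i]^{δ_i} P[Y_i ≥ C]^{1−δ_i} with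
Y_i ~ Binomial(N − i, ρ), i = 1, …, n. -/
noncomputable def rdsLik (n C : ℕ) (δ : Fin n → Bool) (z : Fin n → ℕ) (ρ : ℝ)
    (N : ℕ) : ℝ :=
  ∏ i : Fin n,
    (if δ i then binomPMF (N - ((i : ℕ) + 1)) (z i) ρ
     else binomTail (N - ((i : ℕ) + 1)) C ρ)

lemma binomPMF_nonneg (m k : ℕ) {ρ : ℝ} (h0 : 0 ≤ ρ) (h1 : ρ ≤ 1) :
    0 ≤ binomPMF m k ρ := by
  have : (0:ℝ) ≤ 1 - ρ := by linarith
  unfold binomPMF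
  exact mul_nonneg (mul_nonneg (by positivity) (by positivity)) (pow_nonneg this _)

lemma binomPMF_sum (m : ℕ) (ρ : ℝ) :
    ∑ k ∈ Finset.range (m + 1), binomPMF m k ρ = 1 := by
  have h := add_pow ρ (1 - ρ) m
  simp only [add_sub_cancel, one_pow] at h
  calc ∑ k ∈ Finset.range (m + 1), binomPMF m k ρ
      = ∑ k ∈ Finset.range (m + 1), ρ ^ k * (1 - ρ) ^ (m - k) * (m.choose k : ℝ) := by
        apply Finset.sum_congr rfl; intro k _; unfold binomPMF; ring
    _ = 1 := h.symm

lemma binomPMF_le_one (m k : ℕ) {ρ : ℝ} (h0 : 0 ≤ ρ) (h1 : ρ ≤ 1) :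
    binomPMF m k ρ ≤ 1 := by
  rcases le_or_gt k m with hk | hk
  · rw [← binomPMF_sum m ρ]
    exact Finset.single_le_sum (fun i _ => binomPMF_nonneg m i h0 h1)
      (Finset.mem_range.2 (Nat.lt_succ_of_le hk))
  · unfold binomPMF
    rw [Nat.choose_eq_zero_of_lt hk]
    norm_num

lemma binomTail_nonneg (m x : ℕ) {ρ : ℝ} (h0 : 0 ≤ ρ) (h1 : ρ ≤ 1) :
    0 ≤ binomTail m x ρ :=
  Finset.sum_nonneg fun k _ => binomPMF_nonneg m k h0 h1

lemma binomTail_le_one (m x : ℕ) {ρ : ℝ} (h0 : 0 ≤ ρ) (h1 : ρ ≤ 1) :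
    binomTail m x ρ ≤ 1 := by
  rw [← binomPMF_sum m ρ]
  apply Finset.sum_le_sum_of_subset_of_nonneg
  · intro k hk
    simp only [Finset.mem_Icc] at hk
    exact Finset.mem_range.2 (Nat.lt_succ_of_le hk.2)
  · exact fun i _ _ => binomPMF_nonneg m i h0 h1

lemma binomPMF_tendsto (y : ℕ) {ρ : ℝ} (h0 : 0 < ρ) (h1 : ρ < 1) :
    Tendsto (fun m => binomPMF m y ρ) atTop (nhds 0) := by
  have hq0 : (0:ℝ) ≤ 1 - ρ := by linarith
  have hq1 : 1 - ρ < 1 := by linarith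
  have hq0' : (0:ℝ) < 1 - ρ := by linarith
  have key : Tendsto (fun m : ℕ => (ρ ^ y / (1 - ρ) ^ y) * ((m : ℝ) ^ y * (1 - ρ) ^ m))
      atTop (nhds 0) := by
    have := (tendsto_pow_const_mul_const_pow_of_lt_one y hq0 hq1).const_mul
      (ρ ^ y / (1 - ρ) ^ y)
    simpa using this
  apply squeeze_zero' (g := fun m : ℕ => (ρ ^ y / (1 - ρ) ^ y) * ((m : ℝ) ^ y * (1 - ρ) ^ m))
  · exact Eventually.of_forall fun m => binomPMF_nonneg m y h0.le h1.le
  · filter_upwards [eventually_ge_atTop y] with m hm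
    unfold binomPMF
    have hch : (m.choose y : ℝ) ≤ (m : ℝ) ^ y := by
      exact_mod_cast Nat.choose_le_pow m y
    have hpow : (1 - ρ) ^ (m - y) = (1 - ρ) ^ m / (1 - ρ) ^ y := by
      rw [eq_div_iff (by positivity), ← pow_add]
      congr 1
      omega
    rw [hpow, show ρ ^ y / (1 - ρ) ^ y * ((m:ℝ) ^ y * (1 - ρ) ^ m)
        = (m:ℝ) ^ y * ρ ^ y * ((1 - ρ) ^ m / (1 - ρ) ^ y) from by ring]
    gcongr
  · exact key

/-- For fixed z < C and ρ ∈ (0,1), the binomial mass at z tends to 0 as the number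
of trials m → ∞; consequently, if at least one observation is uncensored, the RDS
likelihood tends to 0 as N → ∞ and attains a finite maximizer in N. -/
theorem binomial_mass_vanishes_and_likelihood_has_finite_maximizer
    (n C : ℕ) (δ : Fin n → Bool) (z : Fin n → ℕ) (ρ : ℝ)
    (hρ0 : 0 < ρ) (hρ1 : ρ < 1) (hC : 1 ≤ C)
    (hz : ∀ i, z i < C) (huncens : ∃ i, δ i = true) :
    (∀ y : ℕ, Tendsto (fun m => binomPMF m y ρ) atTop (nhds 0)) ∧
    Tendsto (fun N => rdsLik n C δ z ρ N) atTop (nhds 0) ∧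
    ∃ N : ℕ, ∀ M : ℕ, rdsLik n C δ z ρ M ≤ rdsLik n C δ z ρ N := by
  obtain ⟨i₀, hi₀⟩ := huncens
  have h0 := hρ0.le
  have h1 := hρ1.le
  have hfac_nonneg : ∀ (N : ℕ) (i : Fin n),
      0 ≤ (if δ i then binomPMF (N - ((i : ℕ) + 1)) (z i) ρ
           else binomTail (N - ((i : ℕ) + 1)) C ρ) := by
    intro N i
    split
    · exact binomPMF_nonneg _ _ h0 h1
    · exact binomTail_nonneg _ _ h0 h1
  have hfac_le_one : ∀ (N : ℕ) (i : Fin n),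
      (if δ i then binomPMF (N - ((i : ℕ) + 1)) (z i) ρ
       else binomTail (N - ((i : ℕ) + 1)) C ρ) ≤ 1 := by
    intro N i
    split
    · exact binomPMF_le_one _ _ h0 h1
    · exact binomTail_le_one _ _ h0 h1
  have hL_nonneg : ∀ N, 0 ≤ rdsLik n C δ z ρ N := fun N =>
    Finset.prod_nonneg fun i _ => hfac_nonneg N i
  have hL_le : ∀ N, rdsLik n C δ z ρ N ≤ binomPMF (N - ((i₀ : ℕ) + 1)) (z i₀) ρ := by
    intro N
    set f : Fin n → ℝ := fun i =>
      (if δ i then binomPMF (N - ((i : ℕ) + 1)) (z i) ρ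
       else binomTail (N - ((i : ℕ) + 1)) C ρ) with hf
    calc rdsLik n C δ z ρ N
        = f i₀ * ∏ i ∈ Finset.univ.erase i₀, f i :=
          (Finset.mul_prod_erase Finset.univ f (Finset.mem_univ i₀)).symm
      _ ≤ f i₀ * 1 := by
          apply mul_le_mul_of_nonneg_left _ (hfac_nonneg N i₀)
          exact Finset.prod_le_one (fun i _ => hfac_nonneg N i) (fun i _ => hfac_le_one N i)
      _ = f i₀ := mul_one _
      _ = binomPMF (N - ((i₀ : ℕ) + 1)) (z i₀) ρ := by rw [hf]; simp [hi₀]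
  have htend : Tendsto (fun N => rdsLik n C δ z ρ N) atTop (nhds 0) := by
    apply squeeze_zero' (g := fun N => binomPMF (N - ((i₀ : ℕ) + 1)) (z i₀) ρ)
    · exact Eventually.of_forall hL_nonneg
    · exact Eventually.of_forall hL_le
    · exact (binomPMF_tendsto (z i₀) hρ0 hρ1).comp
        (tendsto_sub_atTop_nat ((i₀ : ℕ) + 1))
  refine ⟨fun y => binomPMF_tendsto y hρ0 hρ1, htend, ?_⟩
  by_cases hzero : ∀ N, rdsLik n C δ z ρ N = 0
  · exact ⟨0, fun M => by rw [hzero M, hzero 0]⟩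
  · push_neg at hzero
    obtain ⟨N₀, hN₀⟩ := hzero
    have hN₀pos : 0 < rdsLik n C δ z ρ N₀ := lt_of_le_of_ne (hL_nonneg N₀) (Ne.symm hN₀)
    have hev : ∀ᶠ M in atTop, rdsLik n C δ z ρ M < rdsLik n C δ z ρ N₀ :=
      htend.eventually_lt_const hN₀pos
    obtain ⟨K, hK⟩ := eventually_atTop.1 hev
    have hN₀K : N₀ < K := by
      by_contra h
      exact absurd (hK N₀ (le_of_not_gt h)) (lt_irrefl _)
    obtain ⟨Ns, hNs, hNsmax⟩ := Finset.exists_max_image (Finset.range K)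
      (fun N => rdsLik n C δ z ρ N) ⟨N₀, Finset.mem_range.2 hN₀K⟩
    refine ⟨Ns, fun M => ?_⟩
    rcases lt_or_ge M K with hM | hM
    · exact hNsmax M (Finset.mem_range.2 hM)
    · exact le_trans (hK M hM).le (hNsmax N₀ (Finset.mem_range.2 hN₀K))
end
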